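/- arXiv:2007.07623 — 11 statements merged into one kernel-verified Lean document; each statement's English description precedes it below -/
import Mathlib

section
/- Let E ⊆ ℝ^k, F ⊆ ℝ^g, L ⊆ ℝ^d be Borel sets, let p be a Markov (probability) kernel from F to E, let f : F × E × L → F be measurable, let κ, κ̃, δ̃ : L → [0,∞) be measurable, let i ∈ {1,2} and D ≥ 0. Assume that for all s ∈ F, y ∈ E, x ∈ L one has ‖f(s,y,x)‖ ≤ κ(x)‖s‖ + κ̃(x)‖y‖^i + δ̃(x), and that for every s ∈ F the function y ↦ ‖y‖^i is integrable with respect to p(·|s) with ∫ ‖y‖^i p(dy|s) ≤ ‖s‖ + D. Then, setting V(s) = 1 + ‖s‖, for every s ∈ F and x ∈ L: ∫ V(f(s,y,x)) p(dy|s) ≤ (κ(x) + κ̃(x)) V(s) + κ̃(x) D + δ̃(x) + 1. -/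
open MeasureTheory ProbabilityTheory

/-- Foster–Lyapunov drift condition for observation-driven models
(Proposition "pratique1"). -/
theorem drift_condition {g k d : ℕ}
    (E : Set (EuclideanSpace ℝ (Fin k))) (F : Set (EuclideanSpace ℝ (Fin g)))
    (L : Set (EuclideanSpace ℝ (Fin d)))
    (hE : MeasurableSet E) (hF : MeasurableSet F) (hL : MeasurableSet L)
    (p : Kernel F E) [IsMarkovKernel p]
    (f : F × E × L → F) (hf : Measurable f)
    (κ κt δt : L → ℝ)
    (hκ : Measurable κ) (hκt : Measurable κt) (hδt : Measurable δt)
    (hκ0 : ∀ x, 0 ≤ κ x) (hκt0 : ∀ x, 0 ≤ κt x) (hδt0 : ∀ x, 0 ≤ δt x)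
    (i : ℕ) (hi : i = 1 ∨ i = 2) (D : ℝ) (hD : 0 ≤ D)
    (hbound : ∀ (s : F) (y : E) (x : L),
      ‖(f (s, y, x) : EuclideanSpace ℝ (Fin g))‖ ≤
        κ x * ‖(s : EuclideanSpace ℝ (Fin g))‖
          + κt x * ‖(y : EuclideanSpace ℝ (Fin k))‖ ^ i + δt x)
    (hint : ∀ s : F,
      Integrable (fun y : E => ‖(y : EuclideanSpace ℝ (Fin k))‖ ^ i) (p s))
    (hintle : ∀ s : F,
      (∫ y, ‖(y : EuclideanSpace ℝ (Fin k))‖ ^ i ∂(p s)) ≤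
        ‖(s : EuclideanSpace ℝ (Fin g))‖ + D) :
    ∀ (s : F) (x : L),
      (∫ y, (1 + ‖(f (s, y, x) : EuclideanSpace ℝ (Fin g))‖) ∂(p s)) ≤
        (κ x + κt x) * (1 + ‖(s : EuclideanSpace ℝ (Fin g))‖)
          + κt x * D + δt x + 1 := by
  intro s x
  have hmeas : Measurable (fun y : E => (f (s, y, x) : EuclideanSpace ℝ (Fin g))) := by
    exact measurable_subtype_coe.comp (hf.comp (measurable_const.prodMk
      (measurable_id.prodMk measurable_const)))
  -- dominating function
  have hdomint : Integrable (fun y : E =>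
      1 + (κ x * ‖(s : EuclideanSpace ℝ (Fin g))‖
        + κt x * ‖(y : EuclideanSpace ℝ (Fin k))‖ ^ i + δt x)) (p s) := by
    exact (integrable_const _).add
      (((integrable_const _).add ((hint s).const_mul _)).add (integrable_const _))
  have hIint : Integrable (fun y : E =>
      1 + ‖(f (s, y, x) : EuclideanSpace ℝ (Fin g))‖) (p s) := by
    refine hdomint.mono ((measurable_const.add hmeas.norm).aestronglyMeasurable)
      (Filter.Eventually.of_forall fun y => ?_)
    have h1 : (0:ℝ) ≤ 1 + ‖(f (s, y, x) : EuclideanSpace ℝ (Fin g))‖ := by positivity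
    have h2 : (0:ℝ) ≤ κ x * ‖(s : EuclideanSpace ℝ (Fin g))‖
        + κt x * ‖(y : EuclideanSpace ℝ (Fin k))‖ ^ i + δt x := by
      have := hκ0 x; have := hκt0 x; have := hδt0 x
      positivity
    rw [Real.norm_of_nonneg h1, Real.norm_of_nonneg (by linarith)]
    linarith [hbound s y x]
  have hle : (∫ y, (1 + ‖(f (s, y, x) : EuclideanSpace ℝ (Fin g))‖) ∂(p s)) ≤
      ∫ y, (1 + (κ x * ‖(s : EuclideanSpace ℝ (Fin g))‖
        + κt x * ‖(y : EuclideanSpace ℝ (Fin k))‖ ^ i + δt x)) ∂(p s) := by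
    refine integral_mono hIint hdomint fun y => ?_
    have := hbound s y x; dsimp; linarith
  have hrhs : (∫ y, (1 + (κ x * ‖(s : EuclideanSpace ℝ (Fin g))‖
        + κt x * ‖(y : EuclideanSpace ℝ (Fin k))‖ ^ i + δt x)) ∂(p s))
      = 1 + κ x * ‖(s : EuclideanSpace ℝ (Fin g))‖ + δt x
        + κt x * ∫ y, ‖(y : EuclideanSpace ℝ (Fin k))‖ ^ i ∂(p s) := by
    have heq : ∀ y : E, 1 + (κ x * ‖(s : EuclideanSpace ℝ (Fin g))‖
        + κt x * ‖(y : EuclideanSpace ℝ (Fin k))‖ ^ i + δt x)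
        = (1 + κ x * ‖(s : EuclideanSpace ℝ (Fin g))‖ + δt x)
          + κt x * ‖(y : EuclideanSpace ℝ (Fin k))‖ ^ i := fun y => by ring
    simp_rw [heq]
    rw [integral_add (integrable_const _) ((hint s).const_mul _), integral_const,
      integral_const_mul]
    simp [measure_univ]
  have hI := hintle s
  have hκtI : κt x * (∫ y, ‖(y : EuclideanSpace ℝ (Fin k))‖ ^ i ∂(p s))
      ≤ κt x * (‖(s : EuclideanSpace ℝ (Fin g))‖ + D) :=
    mul_le_mul_of_nonneg_left hI (hκt0 x)
  calc (∫ y, (1 + ‖(f (s, y, x) : EuclideanSpace ℝ (Fin g))‖) ∂(p s))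
      ≤ 1 + κ x * ‖(s : EuclideanSpace ℝ (Fin g))‖ + δt x
        + κt x * ∫ y, ‖(y : EuclideanSpace ℝ (Fin k))‖ ^ i ∂(p s) := hle.trans_eq hrhs
    _ ≤ (κ x + κt x) * (1 + ‖(s : EuclideanSpace ℝ (Fin g))‖) + κt x * D + δt x + 1 := by
        have := hκ0 x; have := hκt0 x
        nlinarith [norm_nonneg (s : EuclideanSpace ℝ (Fin g))]
end

section
/- Let Φ(x) = ∫_{-∞}^x (1/√(2π)) e^{-u²/2} du be the cumulative distribution function of the standard Gaussian distribution. There exists a constant d > 0 such that for all λ, λ' ∈ ℝ: |Φ(λ) − Φ(λ')| ≤ 1 − exp(−d(|λ − λ'| + (λ − λ')²)). -/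
/-!
Write `φ` for the standard Gaussian density and `h = |λ - λ'|`. For `h ≤ 1` the bound comes from
`φ ≤ 1/2`, which makes `Φ` `1/2`-Lipschitz, and `exp (-3h) ≤ 1 - h/2`. For `h ≥ 1`, reflecting
through the symmetry of `φ` puts the interval between `λ` and `λ'` inside `(-∞, h]`, which misses
the window `[h, h + 1]` of mass at least `φ (h + 1)`, and `φ (h + 1) ≥ exp (-3 (h + h²))`.
-/

open MeasureTheory ProbabilityTheory Real Set

noncomputable def gaussCDF (x : ℝ) : ℝ :=
  ∫ u in Set.Iic x, (1 / Real.sqrt (2 * Real.pi)) * Real.exp (-u ^ 2 / 2)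

lemma gaussCDF_eq_setIntegral (x : ℝ) : gaussCDF x = ∫ u in Iic x, gaussianPDFReal 0 1 u := by
  simp [gaussCDF, gaussianPDFReal]

lemma gaussCDF_sub_gaussCDF (a b : ℝ) :
    gaussCDF b - gaussCDF a = ∫ u in a..b, gaussianPDFReal 0 1 u := by
  simp only [gaussCDF_eq_setIntegral]
  exact intervalIntegral.integral_Iic_sub_Iic (integrable_gaussianPDFReal 0 1).integrableOn
    (integrable_gaussianPDFReal 0 1).integrableOn

lemma gaussCDF_nonneg (x : ℝ) : 0 ≤ gaussCDF x := by
  rw [gaussCDF_eq_setIntegral]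
  exact setIntegral_nonneg measurableSet_Iic fun u _ => gaussianPDFReal_nonneg 0 1 u

lemma gaussCDF_le_one (x : ℝ) : gaussCDF x ≤ 1 := by
  rw [gaussCDF_eq_setIntegral, ← integral_gaussianPDFReal_eq_one 0 one_ne_zero]
  exact setIntegral_le_integral (integrable_gaussianPDFReal 0 1)
    (Filter.Eventually.of_forall (gaussianPDFReal_nonneg 0 1))

lemma monotone_gaussCDF : Monotone gaussCDF := fun a b hab => by
  rw [← sub_nonneg, gaussCDF_sub_gaussCDF]
  exact intervalIntegral.integral_nonneg hab fun u _ => gaussianPDFReal_nonneg 0 1 u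

lemma gaussianPDFReal_zero_one_neg (x : ℝ) : gaussianPDFReal 0 1 (-x) = gaussianPDFReal 0 1 x := by
  simp [gaussianPDFReal]

lemma gaussCDF_sub_gaussCDF_neg (a b : ℝ) :
    gaussCDF b - gaussCDF a = gaussCDF (-a) - gaussCDF (-b) := by
  rw [gaussCDF_sub_gaussCDF, gaussCDF_sub_gaussCDF, ← intervalIntegral.integral_comp_neg]
  simp only [gaussianPDFReal_zero_one_neg]

lemma gaussianPDFReal_zero_one_le_half (x : ℝ) : gaussianPDFReal 0 1 x ≤ 1 / 2 := by
  have h_sqrt : 2 ≤ √(2 * π) := by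
    rw [le_sqrt (by norm_num) (by positivity)]
    linarith [pi_gt_three]
  have h_exp : rexp (-(x - 0) ^ 2 / (2 * 1)) ≤ 1 := exp_le_one_iff.2 (by nlinarith)
  rw [gaussianPDFReal, NNReal.coe_one, mul_one]
  calc (√(2 * π))⁻¹ * rexp (-(x - 0) ^ 2 / (2 * 1)) ≤ 2⁻¹ * 1 := by gcongr
    _ = 1 / 2 := by norm_num

lemma antitoneOn_gaussianPDFReal_zero_one : AntitoneOn (gaussianPDFReal 0 1) (Ici 0) := by
  intro x hx y hy hxy
  simp only [gaussianPDFReal, NNReal.coe_one, sub_zero, mem_Ici] at *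
  gcongr

lemma abs_gaussCDF_sub_le (a b : ℝ) : |gaussCDF b - gaussCDF a| ≤ |b - a| / 2 := by
  rw [gaussCDF_sub_gaussCDF, div_eq_inv_mul, ← one_div, ← Real.norm_eq_abs]
  refine intervalIntegral.norm_integral_le_of_norm_le_const fun u _ => ?_
  rw [Real.norm_of_nonneg (gaussianPDFReal_nonneg 0 1 u)]
  exact gaussianPDFReal_zero_one_le_half u

lemma abs_gaussCDF_sub_le_gaussCDF_abs_sub (a b : ℝ) :
    |gaussCDF b - gaussCDF a| ≤ gaussCDF |b - a| := by
  wlog hab : a ≤ b generalizing a b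
  · rw [abs_sub_comm, abs_sub_comm b]
    exact this b a (le_of_not_ge hab)
  rw [abs_of_nonneg (sub_nonneg.2 (monotone_gaussCDF hab)), abs_of_nonneg (sub_nonneg.2 hab)]
  rcases le_or_gt a 0 with ha | ha
  · linarith [monotone_gaussCDF (show b ≤ b - a by linarith), gaussCDF_nonneg a]
  · rw [gaussCDF_sub_gaussCDF_neg]
    linarith [monotone_gaussCDF (show -a ≤ b - a by linarith), gaussCDF_nonneg (-b)]

lemma gaussCDF_le_one_sub_gaussianPDFReal {h : ℝ} (hh : 0 ≤ h) :
    gaussCDF h ≤ 1 - gaussianPDFReal 0 1 (h + 1) := by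
  have h_window : gaussianPDFReal 0 1 (h + 1) ≤ ∫ u in h..h + 1, gaussianPDFReal 0 1 u := by
    calc gaussianPDFReal 0 1 (h + 1) = ∫ _ in h..h + 1, gaussianPDFReal 0 1 (h + 1) := by simp
      _ ≤ ∫ u in h..h + 1, gaussianPDFReal 0 1 u :=
        intervalIntegral.integral_mono_on (by linarith) intervalIntegrable_const
          (integrable_gaussianPDFReal 0 1).intervalIntegrable fun u hu =>
            antitoneOn_gaussianPDFReal_zero_one (mem_Ici.2 (hh.trans hu.1))
              (mem_Ici.2 (by linarith)) hu.2
  linarith [gaussCDF_sub_gaussCDF h (h + 1), gaussCDF_le_one (h + 1)]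

lemma exp_neg_three_mul_le_one_sub_half {h : ℝ} (h0 : 0 ≤ h) (h1 : h ≤ 1) :
    rexp (-(3 * (h + h ^ 2))) ≤ 1 - h / 2 := by
  have h_pos : 0 < 1 + 3 * h := by linarith
  calc rexp (-(3 * (h + h ^ 2))) ≤ rexp (-(3 * h)) := exp_le_exp.2 (by nlinarith)
    _ = (rexp (3 * h))⁻¹ := exp_neg _
    _ ≤ (1 + 3 * h)⁻¹ := inv_anti₀ h_pos (by linarith [add_one_le_exp (3 * h)])
    _ ≤ 1 - h / 2 := by rw [inv_le_iff_one_le_mul₀ h_pos]; nlinarith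

lemma exp_neg_three_mul_le_gaussianPDFReal {h : ℝ} (h1 : 1 ≤ h) :
    rexp (-(3 * (h + h ^ 2))) ≤ gaussianPDFReal 0 1 (h + 1) := by
  have h_sqrt : √(2 * π) ≤ rexp 2 := by
    rw [sqrt_le_left (by positivity)]
    nlinarith [add_one_le_exp 2, pi_lt_four]
  simp only [gaussianPDFReal, NNReal.coe_one, mul_one, sub_zero]
  rw [← div_eq_inv_mul, le_div_iff₀ (by positivity)]
  calc rexp (-(3 * (h + h ^ 2))) * √(2 * π) ≤ rexp (-(3 * (h + h ^ 2))) * rexp 2 := by gcongr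
    _ = rexp (-(3 * (h + h ^ 2)) + 2) := (exp_add _ _).symm
    _ ≤ rexp (-(h + 1) ^ 2 / 2) := exp_le_exp.2 (by nlinarith)

/-- Condition A3 for the probit autoregressive model: the increment of the
standard Gaussian cdf is bounded by `1 - exp(-d(h + h²))` with `h = |λ - λ'|`. -/
theorem probit_A3 :
    ∃ d : ℝ, 0 < d ∧ ∀ l l' : ℝ,
      |gaussCDF l - gaussCDF l'| ≤
        1 - Real.exp (-(d * (|l - l'| + (l - l') ^ 2))) := by
  refine ⟨3, by norm_num, fun l l' => ?_⟩
  rw [← sq_abs (l - l')]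
  have h_nonneg := abs_nonneg (l - l')
  rcases le_or_gt |l - l'| 1 with h_small | h_large
  · linarith [abs_gaussCDF_sub_le l' l, exp_neg_three_mul_le_one_sub_half h_nonneg h_small]
  · linarith [abs_gaussCDF_sub_le_gaussCDF_abs_sub l' l,
      gaussCDF_le_one_sub_gaussianPDFReal h_nonneg, exp_neg_three_mul_le_gaussianPDFReal h_large.le]
end

section
/- Let σ(λ) = e^λ / (1 + e^λ) be the logistic function. For all λ, λ' ∈ ℝ: |σ(λ) − σ(λ')| ≤ 1 − exp(−|λ − λ'|). -/
lemma logistic_aux (a b : ℝ) (h : b ≤ a) :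
    Real.exp a / (1 + Real.exp a) - Real.exp b / (1 + Real.exp b) ≤
      1 - Real.exp (b - a) := by
  have hx := Real.exp_pos a
  have hy := Real.exp_pos b
  have hxy : Real.exp b ≤ Real.exp a := Real.exp_le_exp.mpr h
  rw [Real.exp_sub]
  have h1 : (0:ℝ) < 1 + Real.exp a := by linarith
  have h2 : (0:ℝ) < 1 + Real.exp b := by linarith
  rw [div_sub_div _ _ (ne_of_gt h1) (ne_of_gt h2), div_le_iff₀ (by positivity)]
  have : 1 - Real.exp b / Real.exp a = (Real.exp a - Real.exp b) / Real.exp a := by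
    field_simp
  rw [this, div_mul_eq_mul_div, le_div_iff₀ hx]
  ring_nf
  nlinarith [mul_nonneg (sub_nonneg.mpr hxy) hy.le, mul_nonneg (sub_nonneg.mpr hxy) (mul_pos hx hy).le]

lemma logistic_mono (a b : ℝ) (h : b ≤ a) :
    Real.exp b / (1 + Real.exp b) ≤ Real.exp a / (1 + Real.exp a) := by
  have hx := Real.exp_pos a
  have hy := Real.exp_pos b
  have hxy : Real.exp b ≤ Real.exp a := Real.exp_le_exp.mpr h
  rw [div_le_div_iff₀ (by linarith) (by linarith)]
  nlinarith

/-- Condition A3 for the logistic autoregressive binary model: the increment of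
the logistic function is bounded by `1 - exp(-|λ - λ'|)`. -/
theorem logistic_A3 (l l' : ℝ) :
    |Real.exp l / (1 + Real.exp l) - Real.exp l' / (1 + Real.exp l')| ≤
      1 - Real.exp (-|l - l'|) := by
  rcases le_total l' l with h | h
  · rw [abs_of_nonneg (sub_nonneg.mpr (logistic_mono l l' h)),
      abs_of_nonneg (sub_nonneg.mpr h)]
    have := logistic_aux l l' h
    simpa [neg_sub] using this
  · rw [abs_of_nonpos (sub_nonpos.mpr (logistic_mono l' l h)),
      abs_of_nonpos (sub_nonpos.mpr h)]
    have := logistic_aux l' l h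
    simpa [neg_sub] using this
end

section
/- Let N ≥ 2 be an integer. For s ∈ ℝ^{N−1} set S(s) = 1 + Σ_{j=1}^{N−1} exp(s_j), p(i|s) = exp(s_i)/S(s) for i = 1,…,N−1, and p(0|s) = 1/S(s). Then for all s, s' ∈ ℝ^{N−1}: (1/2) Σ_{i=0}^{N−1} |p(i|s) − p(i|s')| ≤ 1 − exp(−max_{1≤i≤N−1} |s_i − s'_i|). -/
/-- The normalizing constant of the multinomial (softmax) distribution. -/
noncomputable def multinomialS {n : ℕ} (s : Fin n → ℝ) : ℝ :=
  1 + ∑ j, Real.exp (s j)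

lemma multinomialS_pos {n : ℕ} (s : Fin n → ℝ) : 0 < multinomialS s := by
  have : 0 ≤ ∑ j, Real.exp (s j) :=
    Finset.sum_nonneg fun j _ => (Real.exp_pos _).le
  unfold multinomialS; linarith

lemma abs_sub_eq_add_sub_two_min (a b : ℝ) : |a - b| = a + b - 2 * min a b := by
  rcases le_total a b with h | h
  · rw [abs_of_nonpos (by linarith), min_eq_left h]; ring
  · rw [abs_of_nonneg (by linarith), min_eq_right h]; ring

lemma key_min_bound {n : ℕ} (s s' : Fin n → ℝ) (h : ℝ) (hh : 0 ≤ h)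
    (hb : ∀ i, |s i - s' i| ≤ h)
    (hle : multinomialS s' ≤ multinomialS s) :
    Real.exp (-h) ≤ min (1 / multinomialS s) (1 / multinomialS s') +
      ∑ i, min (Real.exp (s i) / multinomialS s) (Real.exp (s' i) / multinomialS s') := by
  set T := multinomialS s with hT
  set T' := multinomialS s' with hT'
  have hTpos : 0 < T := multinomialS_pos s
  have hT'pos : 0 < T' := multinomialS_pos s'
  have hmin1 : min (1 / T) (1 / T') = 1 / T := by
    rw [min_eq_left]; exact one_div_le_one_div_of_le hT'pos hle
  have hexp_le : Real.exp (-h) ≤ 1 := Real.exp_le_one_iff.mpr (by linarith)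
  have hstep : ∀ i, Real.exp (-h) * Real.exp (s i) / T ≤
      min (Real.exp (s i) / T) (Real.exp (s' i) / T') := by
    intro i
    have h1 : Real.exp (-h) * Real.exp (s i) ≤ Real.exp (s i) := by
      nlinarith [Real.exp_pos (s i)]
    have h2 : Real.exp (-h) * Real.exp (s i) ≤ Real.exp (s' i) := by
      rw [← Real.exp_add]
      apply Real.exp_le_exp.mpr
      have := hb i
      have := abs_le.mp (hb i)
      linarith [this.1, this.2]
    apply le_min
    · exact div_le_div_of_nonneg_right h1 hTpos.le |>.trans_eq rfl
    · calc Real.exp (-h) * Real.exp (s i) / T ≤ Real.exp (s' i) / T :=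
            div_le_div_of_nonneg_right h2 hTpos.le
        _ ≤ Real.exp (s' i) / T' :=
            div_le_div_of_nonneg_left (Real.exp_pos _).le hT'pos hle
  have hsum : ∑ i, Real.exp (-h) * Real.exp (s i) / T ≤
      ∑ i, min (Real.exp (s i) / T) (Real.exp (s' i) / T') :=
    Finset.sum_le_sum fun i _ => hstep i
  have hid : Real.exp (-h) / T + ∑ i, Real.exp (-h) * Real.exp (s i) / T = Real.exp (-h) := by
    have : ∑ i, Real.exp (-h) * Real.exp (s i) / T
        = Real.exp (-h) * (∑ i, Real.exp (s i)) / T := by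
      rw [Finset.mul_sum, Finset.sum_div]
    rw [this]
    have hTdef : T = 1 + ∑ j, Real.exp (s j) := rfl
    field_simp
    rw [hTdef]
  have h0 : Real.exp (-h) / T ≤ min (1 / T) (1 / T') := by
    rw [hmin1]
    apply div_le_div_of_nonneg_right ?_ hTpos.le |>.trans_eq rfl
    simpa using hexp_le
  linarith

/-- Condition A3 for the multinomial autoregressive model: the total variation
distance between the softmax distributions with parameters `s` and `s'` is at
most `1 - exp(-‖s - s'‖_∞)`. -/
theorem multinomial_A3 (N : ℕ) (hN : 2 ≤ N) (s s' : Fin (N - 1) → ℝ) :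
    (1 / 2) * (|1 / multinomialS s - 1 / multinomialS s'| +
        ∑ i, |Real.exp (s i) / multinomialS s - Real.exp (s' i) / multinomialS s'|) ≤
      1 - Real.exp (-(⨆ i, |s i - s' i|)) := by
  have hpos : 0 < N - 1 := by omega
  haveI : Nonempty (Fin (N - 1)) := ⟨⟨0, hpos⟩⟩
  set h := ⨆ i, |s i - s' i| with hdef
  have hb : ∀ i, |s i - s' i| ≤ h := fun i =>
    le_ciSup (f := fun i => |s i - s' i|) (Set.Finite.bddAbove (Set.finite_range _)) i
  have hh : 0 ≤ h := le_trans (abs_nonneg _) (hb (Classical.arbitrary _))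
  set T := multinomialS s with hT
  set T' := multinomialS s' with hT'
  have hTpos : 0 < T := multinomialS_pos s
  have hT'pos : 0 < T' := multinomialS_pos s'
  set M := min (1 / T) (1 / T') + ∑ i, min (Real.exp (s i) / T) (Real.exp (s' i) / T')
    with hM
  have hMge : Real.exp (-h) ≤ M := by
    rcases le_total T' T with hle | hle
    · exact key_min_bound s s' h hh hb hle
    · have := key_min_bound s' s h hh (fun i => by rw [abs_sub_comm]; exact hb i) hle
      rw [hM, min_comm]
      convert this using 2
      exact Finset.sum_congr rfl fun i _ => min_comm _ _
  have hnorm : ∀ t : Fin (N - 1) → ℝ,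
      1 / multinomialS t + ∑ i, Real.exp (t i) / multinomialS t = 1 := by
    intro t
    have ht : 0 < multinomialS t := multinomialS_pos t
    have hdef' : multinomialS t = 1 + ∑ j, Real.exp (t j) := rfl
    rw [← Finset.sum_div]
    field_simp
    try rw [hdef']; try ring
  have hLHS : (1 / 2) * (|1 / T - 1 / T'| +
      ∑ i, |Real.exp (s i) / T - Real.exp (s' i) / T'|) = 1 - M := by
    have habs : ∑ i, |Real.exp (s i) / T - Real.exp (s' i) / T'|
        = ∑ i, (Real.exp (s i) / T + Real.exp (s' i) / T'
            - 2 * min (Real.exp (s i) / T) (Real.exp (s' i) / T')) :=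
      Finset.sum_congr rfl fun i _ => abs_sub_eq_add_sub_two_min _ _
    rw [habs, abs_sub_eq_add_sub_two_min]
    have e1 := hnorm s
    have e2 := hnorm s'
    rw [Finset.sum_sub_distrib, Finset.sum_add_distrib, ← Finset.mul_sum]
    rw [← hT'] at e2
    rw [hM]; linarith
  rw [hLHS]
  linarith
end

section
/- For all real numbers s, s' ≥ 0: (1/2) Σ_{k=0}^∞ | e^{−s} s^k / k! − e^{−s'} (s')^k / k! | ≤ 1 − e^{−|s − s'|}. -/
private lemma poisson_tsum_exp (x : ℝ) :
    ∑' k : ℕ, x ^ k / (Nat.factorial k : ℝ) = Real.exp x := by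
  rw [Real.exp_eq_exp_ℝ, NormedSpace.exp_eq_tsum_div]

private lemma poisson_aux (s s' : ℝ) (hs : 0 ≤ s) (hs' : 0 ≤ s') (hle : s ≤ s') :
    (1 / 2) * ∑' k : ℕ,
        |Real.exp (-s) * s ^ k / (Nat.factorial k : ℝ) -
          Real.exp (-s') * s' ^ k / (Nat.factorial k : ℝ)| ≤
      1 - Real.exp (-|s - s'|) := by
  set f : ℕ → ℝ := fun k => Real.exp (-s) * s ^ k / (Nat.factorial k : ℝ) with hfdef
  set g : ℕ → ℝ := fun k => Real.exp (-s') * s' ^ k / (Nat.factorial k : ℝ) with hgdef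
  set h : ℕ → ℝ := fun k => Real.exp (-s') * s ^ k / (Nat.factorial k : ℝ) with hhdef
  have feq : ∀ (c x : ℝ), (fun k : ℕ => c * x ^ k / (Nat.factorial k : ℝ)) =
      fun k : ℕ => c * (x ^ k / (Nat.factorial k : ℝ)) := by
    intro c x; funext k; ring
  have hf : Summable f := by
    rw [hfdef, feq]; exact (Real.summable_pow_div_factorial s).mul_left _
  have hg : Summable g := by
    rw [hgdef, feq]; exact (Real.summable_pow_div_factorial s').mul_left _
  have hh : Summable h := by
    rw [hhdef, feq]; exact (Real.summable_pow_div_factorial s).mul_left _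
  have tf : ∑' k, f k = 1 := by
    rw [hfdef, feq, tsum_mul_left, poisson_tsum_exp, ← Real.exp_add]; simp
  have tg : ∑' k, g k = 1 := by
    rw [hgdef, feq, tsum_mul_left, poisson_tsum_exp, ← Real.exp_add]; simp
  have th : ∑' k, h k = Real.exp (s - s') := by
    rw [hhdef, feq, tsum_mul_left, poisson_tsum_exp, ← Real.exp_add]; ring_nf
  -- pointwise bound
  have hpt : ∀ k, |f k - g k| ≤ f k + g k - 2 * h k := by
    intro k
    have hk : (0:ℝ) < (Nat.factorial k : ℝ) := by exact_mod_cast k.factorial_pos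
    have h1 : h k ≤ f k := by
      exact (div_le_div_iff_of_pos_right hk).2
        (mul_le_mul_of_nonneg_right (Real.exp_le_exp.2 (by linarith)) (pow_nonneg hs k))
    have h2 : h k ≤ g k := by
      exact (div_le_div_iff_of_pos_right hk).2
        (mul_le_mul_of_nonneg_left (pow_le_pow_left₀ hs hle k) (Real.exp_pos _).le)
    rw [abs_le]; constructor <;> linarith
  have hb : Summable (fun k => f k + g k - 2 * h k) :=
    (hf.add hg).sub ((hh.mul_left 2).congr fun k => rfl)
  have habs : Summable (fun k => |f k - g k|) := by
    apply Summable.of_nonneg_of_le (fun k => abs_nonneg _) hpt hb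
  have hT : ∑' k, |f k - g k| ≤ ∑' k, (f k + g k - 2 * h k) :=
    Summable.tsum_le_tsum hpt habs hb
  have hsum : ∑' k, (f k + g k - 2 * h k) = 2 - 2 * Real.exp (s - s') := by
    rw [Summable.tsum_sub (hf.add hg) ((hh.mul_left 2).congr fun k => rfl),
      Summable.tsum_add hf hg, tsum_mul_left, tf, tg, th]; ring
  have habsval : -|s - s'| = s - s' := by
    rw [abs_of_nonpos (by linarith)]; ring
  rw [habsval]
  nlinarith [hT, hsum]

/-- Total variation bound between Poisson distributions with means `s` and `s'`:
half the ℓ¹-distance of the probability mass functions is at most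
`1 - exp(-|s - s'|)`. -/
theorem poisson_tv_bound (s s' : ℝ) (hs : 0 ≤ s) (hs' : 0 ≤ s') :
    (1 / 2) * ∑' k : ℕ,
        |Real.exp (-s) * s ^ k / (Nat.factorial k : ℝ) -
          Real.exp (-s') * s' ^ k / (Nat.factorial k : ℝ)| ≤
      1 - Real.exp (-|s - s'|) := by
  rcases le_total s s' with hle | hle
  · exact poisson_aux s s' hs hs' hle
  · have := poisson_aux s' s hs' hs hle
    calc (1 / 2) * ∑' k : ℕ,
        |Real.exp (-s) * s ^ k / (Nat.factorial k : ℝ) -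
          Real.exp (-s') * s' ^ k / (Nat.factorial k : ℝ)|
        = (1 / 2) * ∑' k : ℕ,
        |Real.exp (-s') * s' ^ k / (Nat.factorial k : ℝ) -
          Real.exp (-s) * s ^ k / (Nat.factorial k : ℝ)| := by
          congr 1; exact tsum_congr fun k => abs_sub_comm _ _
      _ ≤ 1 - Real.exp (-|s' - s|) := this
      _ = 1 - Real.exp (-|s - s'|) := by rw [abs_sub_comm]
end

section
/- Let r ≥ 1 be an integer. For s ≥ 0 define the negative binomial probability mass function nb_r(s, k) = C(k + r − 1, k) (s/(s+r))^k (r/(s+r))^r for k ∈ ℕ, where C denotes the binomial coefficient. Then for all s, s' ≥ 0: (1/2) Σ_{k=0}^∞ | nb_r(s, k) − nb_r(s', k) | ≤ 1 − e^{−|s − s'|}. -/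
/-!
The mass functions sum to `1` by the negative binomial series. For `s ≤ s'` there is a pointwise
domination `exp (-(s' - s)) * nb_r(s, k) ≤ nb_r(s', k)`: the factor `(s/(s+r))^k` increases with
`s`, and the factor `(r/(s+r))^r` shrinks by at most `exp (-(s' - s))`, since
`((s'+r)/(s+r))^r = (1 + (s'-s)/(s+r))^r ≤ exp (r (s'-s)/(s+r)) ≤ exp (s'-s)`.
For probability vectors, `c * p ≤ q` pointwise gives `|p - q| ≤ p + q - 2 c p`, so half the
`ℓ¹` distance is at most `1 - c`.
-/

open Real

/-- The negative binomial probability mass function with number of failures `r`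
and success probability `s/(s+r)`. -/
noncomputable def nbPMF (r : ℕ) (s : ℝ) (k : ℕ) : ℝ :=
  ((k + r - 1).choose k : ℝ) * (s / (s + r)) ^ k * ((r : ℝ) / (s + r)) ^ r

theorem half_tsum_abs_sub_le_of_const_mul_le {ι : Type*} {p q : ι → ℝ} {c : ℝ}
    (hp : HasSum p 1) (hq : HasSum q 1) (hp0 : ∀ i, 0 ≤ p i) (hpq : ∀ i, c * p i ≤ q i) :
    1 / 2 * ∑' i, |p i - q i| ≤ 1 - c := by
  have hc : c ≤ 1 := by simpa using hasSum_le hpq (hp.mul_left c) hq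
  have hpointwise : ∀ i, |p i - q i| ≤ p i + q i - 2 * c * p i := fun i => by
    have := mul_le_mul_of_nonneg_right hc (hp0 i)
    rw [abs_le]
    constructor <;> linarith [hpq i]
  have hsum := hasSum_le hpointwise
    ((hp.summable.sub hq.summable).abs.hasSum) ((hp.add hq).sub (hp.mul_left (2 * c)))
  linarith

theorem one_add_div_pow_le_exp {h x : ℝ} {n : ℕ} (hh : 0 ≤ h) (hx : 0 < x) (hnx : n ≤ x) :
    (1 + h / x) ^ n ≤ exp h :=
  calc (1 + h / x) ^ n ≤ exp (h / x) ^ n := by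
        gcongr
        linarith [add_one_le_exp (h / x)]
    _ = exp (n * (h / x)) := (exp_nat_mul _ n).symm
    _ ≤ exp h := by
        gcongr
        rw [← mul_div_assoc, div_le_iff₀ hx]
        nlinarith

theorem nbPMF_nonneg (r : ℕ) {s : ℝ} (hs : 0 ≤ s) (k : ℕ) : 0 ≤ nbPMF r s k := by
  unfold nbPMF
  positivity

theorem hasSum_nbPMF {r : ℕ} (hr : 1 ≤ r) {s : ℝ} (hs : 0 ≤ s) : HasSum (nbPMF r s) 1 := by
  obtain ⟨n, rfl⟩ := Nat.exists_eq_add_of_le' hr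
  have hsr : 0 < s + (n + 1 : ℕ) := by positivity
  have hq : ‖s / (s + (n + 1 : ℕ))‖ < 1 := by
    rw [norm_of_nonneg (by positivity), div_lt_one hsr]
    exact lt_add_of_pos_right s (by positivity)
  have h1q : 1 - s / (s + (n + 1 : ℕ)) = ((n + 1 : ℕ) : ℝ) / (s + (n + 1 : ℕ)) := by
    field_simp
    ring
  have := (hasSum_choose_mul_geometric_of_norm_lt_one n hq).mul_right
    ((((n + 1 : ℕ) : ℝ) / (s + (n + 1 : ℕ))) ^ (n + 1))
  rw [h1q, one_div, inv_mul_cancel₀ (by positivity)] at this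
  convert this using 1
  · rfl
  · funext k
    rw [nbPMF, show k + (n + 1) - 1 = k + n by omega, Nat.choose_symm_add]

theorem exp_neg_sub_mul_div_add_pow_le {r : ℕ} (hr : 1 ≤ r) {s s' : ℝ} (hs : 0 ≤ s)
    (hss' : s ≤ s') : exp (-(s' - s)) * ((r : ℝ) / (s + r)) ^ r ≤ ((r : ℝ) / (s' + r)) ^ r := by
  have hsr : 0 < s + r := by positivity
  have hs'r : 0 < s' + r := by linarith
  have hfactor : (r : ℝ) / (s + r) = r / (s' + r) * (1 + (s' - s) / (s + r)) := by
    field_simp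
    ring
  rw [hfactor, mul_pow, exp_neg, inv_mul_le_iff₀ (exp_pos _), mul_comm (exp _)]
  gcongr
  exact one_add_div_pow_le_exp (sub_nonneg.2 hss') hsr (by linarith)

theorem exp_neg_sub_mul_nbPMF_le {r : ℕ} (hr : 1 ≤ r) {s s' : ℝ} (hs : 0 ≤ s) (hss' : s ≤ s')
    (k : ℕ) : exp (-(s' - s)) * nbPMF r s k ≤ nbPMF r s' k := by
  have hs' : 0 ≤ s' := hs.trans hss'
  have hq : s / (s + r) ≤ s' / (s' + r) := by
    rw [div_le_div_iff₀ (by positivity) (by positivity)]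
    nlinarith
  calc exp (-(s' - s)) * nbPMF r s k
      = (k + r - 1).choose k * (s / (s + r)) ^ k * (exp (-(s' - s)) * ((r : ℝ) / (s + r)) ^ r) := by
        rw [nbPMF]
        ring
    _ ≤ nbPMF r s' k := by
        rw [nbPMF]
        gcongr _ * ?_ ^ k * ?_
        exact exp_neg_sub_mul_div_add_pow_le hr hs hss'

/-- Total variation bound between negative binomial distributions
`NB(r, s/(s+r))` and `NB(r, s'/(s'+r))`: half the ℓ¹-distance of the mass
functions is at most `1 - exp(-|s - s'|)`. -/
theorem negbin_tv_bound (r : ℕ) (hr : 1 ≤ r) (s s' : ℝ) (hs : 0 ≤ s) (hs' : 0 ≤ s') :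
    (1 / 2) * ∑' k : ℕ, |nbPMF r s k - nbPMF r s' k| ≤ 1 - Real.exp (-|s - s'|) := by
  wlog hss' : s ≤ s' generalizing s s'
  · simpa only [abs_sub_comm] using this s' s hs' hs (le_of_not_ge hss')
  rw [abs_of_nonpos (sub_nonpos.2 hss'), neg_sub]
  exact half_tsum_abs_sub_le_of_const_mul_le (hasSum_nbPMF hr hs) (hasSum_nbPMF hr hs')
    (nbPMF_nonneg r hs) (exp_neg_sub_mul_nbPMF_le hr hs hss')
end

section
/- Let f : ℝ → [0,∞) be a probability density (measurable with ∫_ℝ f(u) du = 1) that is non-decreasing on (−∞, 0] and non-increasing on [0, ∞). Then for all real numbers w, w' with 0 < w' ≤ w: ∫_ℝ min( (1/w) f(u/w), (1/w') f(u/w') ) du ≥ w'/w; equivalently, (1/2) ∫_ℝ | (1/w) f(u/w) − (1/w') f(u/w') | du ≤ 1 − w'/w. -/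
open MeasureTheory

/-- Scaling estimate for a unimodal density: for `0 < w' ≤ w`, the overlap
between the densities of `w·ε` and `w'·ε` is at least `w'/w`; equivalently,
their total variation distance is at most `1 - w'/w`. -/
theorem unimodal_scaling_tv (f : ℝ → ℝ) (hf_meas : Measurable f)
    (hf_nonneg : ∀ u, 0 ≤ f u) (hf_int : Integrable f)
    (hf_one : (∫ u, f u) = 1)
    (hf_mono : MonotoneOn f (Set.Iic 0)) (hf_anti : AntitoneOn f (Set.Ici 0))
    (w w' : ℝ) (hw' : 0 < w') (hww : w' ≤ w) :
    w' / w ≤ (∫ u, min ((1 / w) * f (u / w)) ((1 / w') * f (u / w'))) ∧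
    (1 / 2) * (∫ u, |(1 / w) * f (u / w) - (1 / w') * f (u / w')|) ≤ 1 - w' / w := by
  have hw : 0 < w := lt_of_lt_of_le hw' hww
  set g : ℝ → ℝ := fun u => (1 / w) * f (u / w) with hg
  set h : ℝ → ℝ := fun u => (1 / w') * f (u / w') with hh
  -- integrability
  have hg_int : Integrable g := (hf_int.comp_div hw.ne').const_mul _
  have hh_int : Integrable h := (hf_int.comp_div hw'.ne').const_mul _
  have hg_one : (∫ u, g u) = 1 := by
    rw [hg]
    simp only [integral_const_mul, MeasureTheory.Measure.integral_comp_div f w, smul_eq_mul,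
      abs_of_pos hw, hf_one]
    field_simp
  have hh_one : (∫ u, h u) = 1 := by
    rw [hh]
    simp only [integral_const_mul, MeasureTheory.Measure.integral_comp_div f w', smul_eq_mul,
      abs_of_pos hw', hf_one]
    field_simp
  -- pointwise: f (u/w) ≥ f (u/w')
  have key : ∀ u : ℝ, f (u / w') ≤ f (u / w) := by
    intro u
    rcases le_total u 0 with hu | hu
    · have h1 : u / w' ≤ u / w := by
        rw [div_le_div_iff₀ hw' hw]; nlinarith
      exact hf_mono (div_nonpos_of_nonpos_of_nonneg hu hw'.le)
        (div_nonpos_of_nonpos_of_nonneg hu hw.le) h1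
    · have h1 : u / w ≤ u / w' := by
        rw [div_le_div_iff₀ hw hw']; nlinarith
      exact hf_anti (div_nonneg hu hw.le) (div_nonneg hu hw'.le) h1
  -- pointwise lower bound for the min
  have key2 : ∀ u : ℝ, (1 / w) * f (u / w') ≤ min (g u) (h u) := by
    intro u
    refine le_min ?_ ?_
    · exact mul_le_mul_of_nonneg_left (key u) (by positivity)
    · exact mul_le_mul_of_nonneg_right
        (by apply one_div_le_one_div_of_le hw' hww) (hf_nonneg _)
  have hmin_int : Integrable (fun u => min (g u) (h u)) := by
    refine hg_int.mono' ?_ ?_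
    · exact (hg_int.aestronglyMeasurable.inf hh_int.aestronglyMeasurable)
    · filter_upwards with u
      rw [Real.norm_eq_abs, abs_of_nonneg (le_min (mul_nonneg (by positivity) (hf_nonneg _))
        (mul_nonneg (by positivity) (hf_nonneg _)))]
      exact min_le_left _ _
  have hlow_int : Integrable (fun u => (1 / w) * f (u / w')) :=
    (hf_int.comp_div hw'.ne').const_mul _
  have hlow_val : (∫ u, (1 / w) * f (u / w')) = w' / w := by
    simp only [integral_const_mul, MeasureTheory.Measure.integral_comp_div f w', smul_eq_mul,
      abs_of_pos hw', hf_one]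
    ring
  have hmin_ge : w' / w ≤ ∫ u, min (g u) (h u) := by
    rw [← hlow_val]
    exact integral_mono hlow_int hmin_int key2
  refine ⟨hmin_ge, ?_⟩
  have habs : ∀ u : ℝ, |g u - h u| = g u + h u - 2 * min (g u) (h u) := by
    intro u
    rcases le_total (g u) (h u) with h1 | h1
    · rw [abs_of_nonpos (by linarith), min_eq_left h1]; ring
    · rw [abs_of_nonneg (by linarith), min_eq_right h1]; ring
  have : (∫ u, |g u - h u|) = 1 + 1 - 2 * ∫ u, min (g u) (h u) := by
    simp only [habs]
    calc (∫ u, g u + h u - 2 * min (g u) (h u))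
        = (∫ u, g u + h u) - ∫ u, 2 * min (g u) (h u) :=
          integral_sub (hg_int.add hh_int) (hmin_int.const_mul 2)
      _ = 1 + 1 - 2 * ∫ u, min (g u) (h u) := by
          rw [integral_add hg_int hh_int, hg_one, hh_one, integral_const_mul]
  rw [this]
  linarith
end

section
/- Let f : ℝ → [0,∞) be a probability density that is non-decreasing on (−∞, 0] and non-increasing on [0, ∞), and let c₋ > 0. Then for all s, s' with c₋ ≤ s' ≤ s: (1/2) ∫_ℝ | (1/√s) f(u/√s) − (1/√{s'}) f(u/√{s'}) | du ≤ 1 − exp( −(s − s') / (2 c₋) ). -/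
open MeasureTheory

lemma key_tv (f : ℝ → ℝ) (hf_nonneg : ∀ u, 0 ≤ f u) (hf_int : Integrable f)
    (hf_one : (∫ u, f u) = 1)
    (hf_mono : MonotoneOn f (Set.Iic 0)) (hf_anti : AntitoneOn f (Set.Ici 0))
    (a b : ℝ) (hb : 0 < b) (hba : b ≤ a) :
    (1 / 2) * (∫ u, |(1 / a) * f (u / a) - (1 / b) * f (u / b)|) ≤ 1 - b / a := by
  have ha : 0 < a := lt_of_lt_of_le hb hba
  have hia : Integrable (fun u => (1 / a) * f (u / a)) :=
    (hf_int.comp_div ha.ne').const_mul _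
  have hib : Integrable (fun u => (1 / b) * f (u / b)) :=
    (hf_int.comp_div hb.ne').const_mul _
  -- pointwise: f(u/b) ≤ f(u/a)
  have hfab : ∀ u, f (u / b) ≤ f (u / a) := by
    intro u
    rcases le_or_gt 0 u with hu | hu
    · have h1 : u / a ≤ u / b := by
        rw [div_le_div_iff₀ ha hb]; nlinarith
      exact hf_anti (div_nonneg hu ha.le) (div_nonneg hu hb.le) h1
    · have h1 : u / b ≤ u / a := by
        rw [div_le_div_iff₀ hb ha]; nlinarith
      exact hf_mono (le_of_lt (div_neg_of_neg_of_pos hu hb))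
        (le_of_lt (div_neg_of_neg_of_pos hu ha)) h1
  -- m(u) := (b/a) * (1/b) * f(u/b) is below both densities
  have hm1 : ∀ u, (b / a) * ((1 / b) * f (u / b)) ≤ (1 / a) * f (u / a) := by
    intro u
    have : (b / a) * ((1 / b) * f (u / b)) = (1 / a) * f (u / b) := by
      field_simp
    rw [this]
    exact mul_le_mul_of_nonneg_left (hfab u) (by positivity)
  have hm2 : ∀ u, (b / a) * ((1 / b) * f (u / b)) ≤ (1 / b) * f (u / b) := by
    intro u
    have h0 : 0 ≤ (1 / b) * f (u / b) := by
      have := hf_nonneg (u / b); positivity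
    nlinarith [div_le_one_of_le₀ hba ha.le, (div_pos hb ha).le]
  -- pointwise bound on the absolute difference
  have hpt : ∀ u, |(1 / a) * f (u / a) - (1 / b) * f (u / b)| ≤
      ((1 / a) * f (u / a) + (1 / b) * f (u / b)) -
        2 * ((b / a) * ((1 / b) * f (u / b))) := by
    intro u
    rw [abs_sub_le_iff]
    constructor <;> nlinarith [hm1 u, hm2 u]
  -- integrate
  have hint_rhs : Integrable (fun u => ((1 / a) * f (u / a) + (1 / b) * f (u / b)) -
      2 * ((b / a) * ((1 / b) * f (u / b)))) :=
    (hia.add hib).sub ((hib.const_mul _).const_mul _)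
  have hle : (∫ u, |(1 / a) * f (u / a) - (1 / b) * f (u / b)|) ≤
      ∫ u, (((1 / a) * f (u / a) + (1 / b) * f (u / b)) -
        2 * ((b / a) * ((1 / b) * f (u / b)))) :=
    integral_mono (hia.sub hib).abs hint_rhs hpt
  have hIa : (∫ u, (1 / a) * f (u / a)) = 1 := by
    rw [integral_const_mul, MeasureTheory.Measure.integral_comp_div f a, hf_one,
      abs_of_pos ha, smul_eq_mul]
    field_simp
  have hIb : (∫ u, (1 / b) * f (u / b)) = 1 := by
    rw [integral_const_mul, MeasureTheory.Measure.integral_comp_div f b, hf_one,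
      abs_of_pos hb, smul_eq_mul]
    field_simp
  have hcomp : (∫ u, (((1 / a) * f (u / a) + (1 / b) * f (u / b)) -
      2 * ((b / a) * ((1 / b) * f (u / b))))) = 2 - 2 * (b / a) := by
    have e1 : (fun u => ((1 / a) * f (u / a) + (1 / b) * f (u / b)) -
        2 * ((b / a) * ((1 / b) * f (u / b)))) =
        fun u => (1 / a) * f (u / a) + (1 - 2 * (b / a)) * ((1 / b) * f (u / b)) := by
      funext u; ring
    rw [e1, integral_add hia (hib.const_mul _), hIa, integral_const_mul, hIb]
    ring
  rw [hcomp] at hle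
  linarith

/-- Condition A3 for the GARCH-type model: the total variation distance between
the observation densities with variances `s` and `s'` (both bounded below by
`c₋ > 0`) is at most `1 - exp(-(s - s')/(2c₋))`. -/
theorem garch_A3 (f : ℝ → ℝ) (hf_meas : Measurable f)
    (hf_nonneg : ∀ u, 0 ≤ f u) (hf_int : Integrable f)
    (hf_one : (∫ u, f u) = 1)
    (hf_mono : MonotoneOn f (Set.Iic 0)) (hf_anti : AntitoneOn f (Set.Ici 0))
    (c : ℝ) (hc : 0 < c) (s s' : ℝ) (hcs' : c ≤ s') (hs's : s' ≤ s) :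
    (1 / 2) * (∫ u, |(1 / Real.sqrt s) * f (u / Real.sqrt s) -
        (1 / Real.sqrt s') * f (u / Real.sqrt s')|) ≤
      1 - Real.exp (-((s - s') / (2 * c))) := by
  have hs' : 0 < s' := lt_of_lt_of_le hc hcs'
  have hs : 0 < s := lt_of_lt_of_le hs' hs's
  have hb : 0 < Real.sqrt s' := Real.sqrt_pos.mpr hs'
  have ha : 0 < Real.sqrt s := Real.sqrt_pos.mpr hs
  have hba : Real.sqrt s' ≤ Real.sqrt s := Real.sqrt_le_sqrt hs's
  have h1 := key_tv f hf_nonneg hf_int hf_one hf_mono hf_anti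
    (Real.sqrt s) (Real.sqrt s') hb hba
  refine h1.trans ?_
  have hexp : Real.exp (-((s - s') / (2 * c))) ≤ Real.sqrt s' / Real.sqrt s := by
    rw [← Real.exp_log (div_pos hb ha)]
    apply Real.exp_le_exp.mpr
    rw [Real.log_div hb.ne' ha.ne', Real.log_sqrt hs'.le, Real.log_sqrt hs.le]
    have hlog : Real.log s - Real.log s' ≤ (s - s') / s' := by
      have h2 : Real.log (s / s') ≤ s / s' - 1 :=
        Real.log_le_sub_one_of_pos (div_pos hs hs')
      rw [Real.log_div hs.ne' hs'.ne'] at h2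
      have : s / s' - 1 = (s - s') / s' := by field_simp
      linarith [this ▸ h2]
    have h3 : (s - s') / s' ≤ (s - s') / c := by
      gcongr
    have h4 : (s - s') / (2 * c) = ((s - s') / c) / 2 := by ring
    linarith
  linarith
end

section
/- Let f : ℝ → [0,∞) be a probability density that is symmetric (f(−y) = f(y)), continuous at 0, non-increasing on [0, ∞) (hence non-decreasing on (−∞, 0]), and suppose there exist h₁, C, C' > 0 and an integer m > 2 such that f(y) ≥ C exp(−C' y^m) for all y ≥ h₁. Then there exist constants D, D' > 0 such that for all h ≥ 0: ∫_ℝ min( f(y), f(y − h) ) dy ≥ exp( −D (h + h^{D'}) ). -/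
/-!
Since `f` is even and non-increasing in `|y|`, the integrand `min (f y) (f (y - h))` is `f y` for
`y ≥ h / 2` and `f (y - h)` for `y < h / 2`, so the overlap is the mass of `f` outside
`[-h/2, h/2)`, at least `1 - f 0 * h`; this beats `exp (-2 f(0) h)` for small `h`. For large `h`,
on `[a, a + 1]` with `a = max (h/2) h₁` the integrand is at least
`f (a + 1) ≥ C exp (-C' (a + 1) ^ m)`, and `a + 1 = O(h)` there.
-/

open MeasureTheory Set Real

theorem Function.Even.apply_le_apply_of_abs_le {β : Type*} [Preorder β] {f : ℝ → β}
    (hf : Function.Even f) (hf_anti : AntitoneOn f (Ici 0)) {x y : ℝ} (hxy : |x| ≤ |y|) :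
    f y ≤ f x := by
  have apply_abs : ∀ u, f |u| = f u := fun u => by
    rcases abs_choice u with h | h <;> rw [h]
    exact hf u
  rw [← apply_abs x, ← apply_abs y]
  exact hf_anti (abs_nonneg x) (abs_nonneg y) hxy

noncomputable def overlap (f : ℝ → ℝ) (h : ℝ) : ℝ := ∫ y, min (f y) (f (y - h))

section Overlap

variable {f : ℝ → ℝ}

theorem integrable_min_comp_sub (hf : Integrable f) (h : ℝ) :
    Integrable fun y => min (f y) (f (y - h)) :=
  hf.inf (hf.comp_sub_right h)

theorem setIntegral_Iio_comp_sub (b c : ℝ) :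
    ∫ y in Iio b, f (y - c) = ∫ y in Iio (b - c), f y := by
  rw [← (measurePreserving_sub_right volume c).setIntegral_preimage_emb
    (measurableEmbedding_subRight c) f (Iio (b - c)), preimage_sub_const_Iio, sub_add_cancel]

theorem one_sub_mul_le_overlap (hf_int : Integrable f) (hf_one : ∫ y, f y = 1)
    (hf_even : Function.Even f) (hf_anti : AntitoneOn f (Ici 0)) {h : ℝ} (hh : 0 ≤ h) :
    1 - f 0 * h ≤ overlap f h := by
  have below :
      (Ici (h / 2)).piecewise f (fun y => f (y - h)) ≤ fun y => min (f y) (f (y - h)) := by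
    intro y
    rcases le_or_gt (h / 2) y with hy | hy
    · rw [piecewise_eq_of_mem _ _ _ (mem_Ici.mpr hy)]
      refine le_min le_rfl (hf_even.apply_le_apply_of_abs_le hf_anti ?_)
      exact (abs_le.mpr ⟨by linarith, by linarith⟩).trans (le_abs_self y)
    · rw [piecewise_eq_of_notMem _ _ _ (notMem_Ici.mpr hy)]
      refine le_min (hf_even.apply_le_apply_of_abs_le hf_anti ?_) le_rfl
      exact (abs_le.mpr ⟨by linarith, by linarith⟩).trans (neg_le_abs (y - h))
  have middle : ∫ y in Ico (-(h / 2)) (h / 2), f y ≤ f 0 * h :=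
    calc ∫ y in Ico (-(h / 2)) (h / 2), f y ≤ ∫ _ in Ico (-(h / 2)) (h / 2), f 0 :=
          setIntegral_mono_on hf_int.integrableOn (integrableOn_const measure_Ico_lt_top.ne)
            measurableSet_Ico fun y _ => hf_even.apply_le_apply_of_abs_le hf_anti (by simp)
      _ = f 0 * h := by simp [Real.volume_real_Ico, hh, mul_comm]
  have total := intervalIntegral.integral_Iio_add_Ici (b := -(h / 2))
    hf_int.integrableOn hf_int.integrableOn
  have tails := intervalIntegral.integral_Ici_sub_Ici hf_int.integrableOn
    (by linarith : -(h / 2) ≤ h / 2)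
  calc 1 - f 0 * h ≤ (∫ y in Ici (h / 2), f y) + ∫ y in Iio (-(h / 2)), f y := by linarith
    _ = ∫ y, (Ici (h / 2)).piecewise f (fun y => f (y - h)) y := by
      rw [integral_piecewise measurableSet_Ici hf_int.integrableOn
        (hf_int.comp_sub_right h).integrableOn, compl_Ici, setIntegral_Iio_comp_sub,
        show h / 2 - h = -(h / 2) by ring]
    _ ≤ overlap f h :=
      integral_mono (Integrable.piecewise measurableSet_Ici hf_int.integrableOn
        (hf_int.comp_sub_right h).integrableOn)
        (integrable_min_comp_sub hf_int h) below

theorem apply_add_one_le_overlap (hf_nonneg : ∀ y, 0 ≤ f y) (hf_int : Integrable f)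
    (hf_even : Function.Even f) (hf_anti : AntitoneOn f (Ici 0)) {h a : ℝ} (hh : 0 ≤ h)
    (ha : h ≤ 2 * a) : f (a + 1) ≤ overlap f h := by
  have bound : ∀ y ∈ Icc a (a + 1), f (a + 1) ≤ min (f y) (f (y - h)) := fun y hy =>
    le_min
      (hf_even.apply_le_apply_of_abs_le hf_anti
        ((abs_le.mpr ⟨by linarith [hy.1], hy.2⟩).trans (le_abs_self _)))
      (hf_even.apply_le_apply_of_abs_le hf_anti
        ((abs_le.mpr ⟨by linarith [hy.1], by linarith [hy.2]⟩).trans (le_abs_self _)))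
  calc f (a + 1) = f (a + 1) * volume.real (Icc a (a + 1)) := by simp
    _ ≤ ∫ y in Icc a (a + 1), min (f y) (f (y - h)) :=
      setIntegral_ge_of_const_le_real measurableSet_Icc (by simp) bound
        (integrable_min_comp_sub hf_int h).integrableOn
    _ ≤ overlap f h :=
      setIntegral_le_integral (integrable_min_comp_sub hf_int h)
        (Filter.Eventually.of_forall fun y => le_min (hf_nonneg y) (hf_nonneg (y - h)))

end Overlap

theorem exp_neg_two_mul_le_one_sub {x : ℝ} (hx₀ : 0 ≤ x) (hx : x ≤ 1 / 2) :
    exp (-(2 * x)) ≤ 1 - x := by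
  rw [exp_neg, inv_le_iff_one_le_mul₀ (exp_pos _)]
  calc 1 ≤ (1 - x) * (2 * x + 1) := by nlinarith
    _ ≤ (1 - x) * exp (2 * x) := by
      gcongr
      · linarith
      · exact add_one_le_exp _

theorem exists_exp_neg_le_mul_exp_neg_pow {C C' h₀ c : ℝ} (hC : 0 < C) (hC' : 0 ≤ C')
    (hh₀ : 0 < h₀) (hc : 0 ≤ c) (m : ℕ) :
    ∃ D > 0, ∀ h, h₀ ≤ h →
      exp (-(D * (h + h ^ m))) ≤ C * exp (-(C' * (h + c) ^ m)) := by
  set B := 1 + c / h₀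
  set D := C' * B ^ m + |log C| / h₀ + 1
  have hD₁ : |log C| / h₀ ≤ D := by linarith [show 0 ≤ C' * B ^ m by positivity]
  have hD₂ : C' * B ^ m ≤ D := by linarith [show 0 ≤ |log C| / h₀ by positivity]
  refine ⟨D, by positivity, fun h hh => ?_⟩
  have hscale : ∀ t, 0 ≤ t → t ≤ t / h₀ * h := fun t ht => by
    rw [div_mul_comm]; exact le_mul_of_one_le_left ht ((one_le_div hh₀).mpr hh)
  have hB : h + c ≤ B * h := by linarith [hscale c hc]
  have hlog : -log C ≤ |log C| / h₀ * h := by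
    linarith [hscale _ (abs_nonneg (log C)), neg_le_abs (log C)]
  have hpow : C' * (h + c) ^ m ≤ C' * B ^ m * h ^ m := by
    rw [mul_assoc, ← mul_pow]; gcongr; linarith
  rw [← exp_log hC, ← exp_add, exp_le_exp]
  have h0 : 0 ≤ h := hh₀.le.trans hh
  calc -(D * (h + h ^ m)) = -(D * h) - D * h ^ m := by ring
    _ ≤ -(|log C| / h₀ * h) - C' * B ^ m * h ^ m := by gcongr
    _ ≤ log C + -(C' * (h + c) ^ m) := by linarith

theorem homoscedastic_A3_general (f : ℝ → ℝ)
    (hf_nonneg : ∀ u, 0 ≤ f u) (hf_int : Integrable f)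
    (hf_one : (∫ u, f u) = 1)
    (hf_symm : ∀ y, f (-y) = f y)
    (hf_anti : AntitoneOn f (Set.Ici 0))
    (h₁ C C' : ℝ) (hC : 0 < C) (hC' : 0 < C')
    (m : ℕ) (hm : 2 < m)
    (hlb : ∀ y : ℝ, h₁ ≤ y → C * Real.exp (-(C' * y ^ m)) ≤ f y) :
    ∃ D D' : ℝ, 0 < D ∧ 0 < D' ∧ ∀ h : ℝ, 0 ≤ h →
      Real.exp (-(D * (h + h ^ D'))) ≤ ∫ y, min (f y) (f (y - h)) := by
  have hf0 : 0 ≤ f 0 := hf_nonneg 0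
  obtain ⟨h₀, hh₀, hf0h⟩ : ∃ h₀ > 0, ∀ h ≤ h₀, f 0 * h ≤ 1 / 2 := by
    refine ⟨1 / (2 * f 0 + 1), by positivity, fun h hh => ?_⟩
    calc f 0 * h ≤ f 0 * (1 / (2 * f 0 + 1)) := by gcongr
      _ ≤ 1 / 2 := by rw [mul_one_div, div_le_iff₀ (by positivity)]; linarith
  obtain ⟨D, hD, hD_bound⟩ :=
    exists_exp_neg_le_mul_exp_neg_pow hC hC'.le hh₀ (by positivity : 0 ≤ |h₁| + 1) m
  refine ⟨max (2 * f 0) D, m, lt_max_of_lt_right hD, by exact_mod_cast (by omega : 0 < m),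
    fun h hh => ?_⟩
  rw [rpow_natCast]
  rcases le_or_gt h h₀ with h_small | h_large
  · calc exp (-(max (2 * f 0) D * (h + h ^ m))) ≤ exp (-(2 * f 0 * h)) := by
          gcongr
          · exact le_max_left _ _
          · exact le_add_of_nonneg_right (pow_nonneg hh m)
      _ ≤ 1 - f 0 * h := by
          rw [mul_assoc]; exact exp_neg_two_mul_le_one_sub (by positivity) (hf0h h h_small)
      _ ≤ overlap f h := one_sub_mul_le_overlap hf_int hf_one hf_symm hf_anti hh
  · set a := max (h / 2) h₁
    have ha : h / 2 ≤ a := le_max_left _ _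
    have ha' : a ≤ h + |h₁| :=
      max_le (by linarith [abs_nonneg h₁]) (by linarith [le_abs_self h₁])
    calc exp (-(max (2 * f 0) D * (h + h ^ m))) ≤ exp (-(D * (h + h ^ m))) := by
          gcongr
          exact le_max_right _ _
      _ ≤ C * exp (-(C' * (h + (|h₁| + 1)) ^ m)) := hD_bound h h_large.le
      _ ≤ C * exp (-(C' * (a + 1) ^ m)) := by
          gcongr C * exp (-(C' * ?_ ^ m))
          linarith
      _ ≤ f (a + 1) := hlb _ (by linarith [le_max_right (h / 2) h₁])
      _ ≤ overlap f h :=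
          apply_add_one_le_overlap hf_nonneg hf_int hf_symm hf_anti hh (by linarith)

/-- Condition A3 for conditionally homoscedastic autoregressions: for a
symmetric unimodal density with a stretched-exponential lower bound on its
tail, the overlap `∫ min(f(y), f(y-h)) dy` is at least `exp(-D(h + h^{D'}))`
for all `h ≥ 0`. -/
theorem homoscedastic_A3 (f : ℝ → ℝ) (hf_meas : Measurable f)
    (hf_nonneg : ∀ u, 0 ≤ f u) (hf_int : Integrable f)
    (hf_one : (∫ u, f u) = 1)
    (hf_symm : ∀ y, f (-y) = f y) (hf_cont : ContinuousAt f 0)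
    (hf_anti : AntitoneOn f (Set.Ici 0))
    (h₁ C C' : ℝ) (hh₁ : 0 < h₁) (hC : 0 < C) (hC' : 0 < C')
    (m : ℕ) (hm : 2 < m)
    (hlb : ∀ y : ℝ, h₁ ≤ y → C * Real.exp (-(C' * y ^ m)) ≤ f y) :
    ∃ D D' : ℝ, 0 < D ∧ 0 < D' ∧ ∀ h : ℝ, 0 ≤ h →
      Real.exp (-(D * (h + h ^ D'))) ≤ ∫ y, min (f y) (f (y - h)) :=
  homoscedastic_A3_general f hf_nonneg hf_int hf_one hf_symm hf_anti h₁ C C' hC hC' m hm hlb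
end

section
/- Let (Ω, 𝓕, P) be a probability space with a filtration (𝓕_i)_{i∈ℕ}, and let (W_i)_{i∈ℕ} be an adapted sequence of nonnegative integrable random variables. Let C > 1 and assume that for every i ≥ 1, E[W_i | 𝓕_{i−1}] ≤ (1 − 1/C) W_{i−1} + C almost surely. Set C₁ = C(2C + 2), η = 2/(2 − 1/C), and let ρ = inf{ i ≥ 0 : W_i ≤ C₁ } (with ρ = ∞ if no such i exists). If W_0 = x almost surely for a constant x > C₁, then E[η^ρ] ≤ x; in particular ρ < ∞ almost surely. -/
/-!
Let `ρ` be the hitting time of `{W ≤ C₁}` and `V k = η ^ k * max (W k) 1`. While `W k > C₁`, the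
drift condition and the choice of `C₁` and `η` give `E[V (k + 1) | 𝓕 k] ≤ V k`, so the process `V`
stopped at `ρ` has nonincreasing expectation, bounded by `E[V 0] = x`. Since `V k ≥ η ^ k`, this
bounds `E[η ^ min ρ n]` by `x` for every `n`, and monotone convergence gives `E[η ^ ρ] ≤ x`. An
integrand that is `∞` off `{ρ < ∞}` and has finite integral forces `ρ < ∞` almost surely.
-/

open MeasureTheory

section StoppedProcess

variable {Ω : Type*}

theorem stoppedProcess_succ {E : Type*} [AddCommGroup E] (u : ℕ → Ω → E) (τ : Ω → WithTop ℕ)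
    (n : ℕ) :
    stoppedProcess u τ (n + 1) =
      stoppedProcess u τ n + {ω | (n : WithTop ℕ) < τ ω}.indicator (u (n + 1) - u n) := by
  ext ω
  rw [Pi.add_apply, Set.indicator_apply]
  -- `(n : WithTop ℕ)` elaborates to `Nat.cast n`, the stopping-time API to `WithTop.some n`,
  -- hence the explicit `(i := _)`.
  split_ifs with h
  · -- `WithTop ℕ` has no `SuccAddOrder` instance; `ℕ∞`, the same type, does.
    have h' : ((n + 1 : ℕ) : WithTop ℕ) ≤ τ ω := Order.add_one_le_of_lt (α := ℕ∞) h
    rw [stoppedProcess_eq_of_le (i := n + 1) h', stoppedProcess_eq_of_le (i := n) (le_of_lt h),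
      Pi.sub_apply, add_sub_cancel]
  · have hle : τ ω ≤ n := not_lt.mp h
    have h' : τ ω ≤ ((n + 1 : ℕ) : WithTop ℕ) := hle.trans (by exact_mod_cast n.le_succ)
    rw [add_zero, stoppedProcess_eq_of_ge (i := n) hle, stoppedProcess_eq_of_ge (i := n + 1) h']

theorem stoppedProcess_apply_mono {u : ℕ → Ω → ℝ} (τ : Ω → WithTop ℕ) (ω : Ω)
    (hu : Monotone (u · ω)) : Monotone (stoppedProcess u τ · ω) := by
  refine monotone_nat_of_le_succ fun n => ?_
  rw [stoppedProcess_succ, Pi.add_apply, le_add_iff_nonneg_right]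
  exact Set.indicator_apply_nonneg fun _ => sub_nonneg.mpr (hu n.le_succ)

theorem iSup_ofReal_stoppedProcess_pow {η : ℝ} (hη : 1 < η) (τ : Ω → WithTop ℕ) (ω : Ω) :
    ⨆ n : ℕ, ENNReal.ofReal (stoppedProcess (fun k _ => η ^ k) τ n ω) =
      if τ ω = ⊤ then ⊤ else ENNReal.ofReal (η ^ (τ ω).untopA) := by
  cases hτ : τ ω with
  | top =>
    simp only [stoppedProcess_eq_of_le (hτ ▸ le_top : _ ≤ τ ω), if_true]
    refine iSup_eq_top.mpr fun b hb => ?_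
    obtain ⟨n, hn⟩ := pow_unbounded_of_one_lt b.toReal hη
    refine ⟨n, ?_⟩
    rw [← ENNReal.ofReal_toReal hb.ne]
    exact (ENNReal.ofReal_lt_ofReal_iff (by positivity)).mpr hn
  | coe k =>
    simp only [WithTop.coe_ne_top, if_false, WithTop.untopD_coe]
    refine le_antisymm (iSup_le fun n => ENNReal.ofReal_le_ofReal ?_) (le_iSup_of_le k ?_)
    · simp only [stoppedProcess, hτ]
      rw [← WithTop.coe_min]
      exact pow_le_pow_right₀ hη.le (min_le_right n k)
    · rw [stoppedProcess_eq_of_le (i := k) (hτ ▸ le_rfl)]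

open Classical in
theorem iSup_ofReal_stoppedProcess_pow_hittingAfter {η : ℝ} (hη : 1 < η) (W : ℕ → Ω → ℝ)
    (c : ℝ) (ω : Ω) :
    ⨆ n : ℕ, ENNReal.ofReal (stoppedProcess (fun k _ => η ^ k) (hittingAfter W (Set.Iic c) 0) n ω)
      = if {i : ℕ | W i ω ≤ c}.Nonempty then ENNReal.ofReal (η ^ sInf {i : ℕ | W i ω ≤ c})
        else ⊤ := by
  rw [iSup_ofReal_stoppedProcess_pow hη]
  by_cases h : ∃ j, W j ω ≤ c <;>
    simp [hittingAfter_def, h, Set.Nonempty, WithTop.untopD_coe, -ENat.some_eq_natCast]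

variable {m0 : MeasurableSpace Ω} {μ : Measure Ω} [IsFiniteMeasure μ] {𝓕 : Filtration ℕ m0}

theorem MeasureTheory.IsStoppingTime.measurable_stoppedProcess_deterministic
    {τ : Ω → WithTop ℕ} (hτ : IsStoppingTime 𝓕 τ) (a : ℕ → ℝ) (n : ℕ) :
    Measurable (stoppedProcess (fun k (_ : Ω) => a k) τ n) :=
  ((stronglyAdapted_const' 𝓕 a).stoppedProcess_of_discrete hτ n).measurable.mono (𝓕.le n) le_rfl

theorem integral_stoppedProcess_le {V : ℕ → Ω → ℝ} {τ : Ω → WithTop ℕ}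
    (hτ : IsStoppingTime 𝓕 τ) (hV : ∀ n, Integrable (V n) μ)
    (hdrift : ∀ n : ℕ, ∀ᵐ ω ∂μ, (n : WithTop ℕ) < τ ω → μ[V (n + 1) | 𝓕 n] ω ≤ V n ω)
    (n : ℕ) : ∫ ω, stoppedProcess V τ n ω ∂μ ≤ ∫ ω, V 0 ω ∂μ := by
  induction n with
  | zero => simp [stoppedProcess]
  | succ n ih =>
    set s := {ω | (n : WithTop ℕ) < τ ω}
    have hs : MeasurableSet[𝓕 n] s := hτ.measurableSet_gt n
    have hincr : ∫ ω in s, (V (n + 1) - V n) ω ∂μ ≤ 0 := by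
      rw [integral_sub' (hV _).integrableOn (hV _).integrableOn, sub_nonpos,
        ← setIntegral_condExp (𝓕.le n) (hV _) hs]
      refine setIntegral_mono_ae_restrict integrable_condExp.integrableOn (hV n).integrableOn ?_
      exact (ae_restrict_iff' (𝓕.le n _ hs)).mpr (hdrift n)
    rw [stoppedProcess_succ, integral_add' (integrable_stoppedProcess hτ hV n)
      (((hV _).sub (hV _)).indicator (𝓕.le n _ hs)), integral_indicator (𝓕.le n _ hs)]
    linarith

theorem lintegral_iSup_ofReal_stoppedProcess_pow_le {τ : Ω → WithTop ℕ}
    (hτ : IsStoppingTime 𝓕 τ) {W : ℕ → Ω → ℝ} (hint : ∀ k, Integrable (W k) μ) {η : ℝ}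
    (hη : 1 ≤ η)
    (hdrift : ∀ n : ℕ, ∀ᵐ ω ∂μ, (n : WithTop ℕ) < τ ω →
      μ[fun ω => η ^ (n + 1) * max (W (n + 1) ω) 1 | 𝓕 n] ω ≤ η ^ n * max (W n ω) 1) :
    ∫⁻ ω, ⨆ n : ℕ, ENNReal.ofReal (stoppedProcess (fun k _ => η ^ k) τ n ω) ∂μ ≤
      ENNReal.ofReal (∫ ω, max (W 0 ω) 1 ∂μ) := by
  set V : ℕ → Ω → ℝ := fun k ω => η ^ k * max (W k ω) 1
  have hV : ∀ k, Integrable (V k) μ := fun k => ((hint k).sup (integrable_const 1)).const_mul _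
  have hη0 : 0 ≤ η := zero_le_one.trans hη
  rw [lintegral_iSup (fun n => (hτ.measurable_stoppedProcess_deterministic _ n).ennreal_ofReal)
    (fun a b hab ω => ENNReal.ofReal_le_ofReal
      (stoppedProcess_apply_mono τ ω (fun _ _ h => pow_le_pow_right₀ hη h) hab))]
  refine iSup_le fun n => ?_
  calc ∫⁻ ω, ENNReal.ofReal (stoppedProcess (fun k _ => η ^ k) τ n ω) ∂μ
      ≤ ∫⁻ ω, ENNReal.ofReal (stoppedProcess V τ n ω) ∂μ :=
        lintegral_mono fun ω => ENNReal.ofReal_le_ofReal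
          (le_mul_of_one_le_right (pow_nonneg hη0 _) (le_max_right _ _))
    _ = ENNReal.ofReal (∫ ω, stoppedProcess V τ n ω ∂μ) :=
        (ofReal_integral_eq_lintegral_ofReal (integrable_stoppedProcess hτ hV n)
          (ae_of_all _ fun ω => mul_nonneg (pow_nonneg hη0 _)
            (zero_le_one.trans (le_max_right _ _)))).symm
    _ ≤ ENNReal.ofReal (∫ ω, V 0 ω ∂μ) :=
        ENNReal.ofReal_le_ofReal (integral_stoppedProcess_le hτ hV hdrift n)
    _ = ENNReal.ofReal (∫ ω, max (W 0 ω) 1 ∂μ) := by simp [V]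

end StoppedProcess

section Drift

variable {Ω : Type*}

theorem one_lt_two_div_two_sub_one_div {C : ℝ} (hC : 1 < C) : 1 < 2 / (2 - 1 / C) := by
  have hpos : 0 < 1 / C := by positivity
  have hlt : 1 / C < 1 := (div_lt_one (by linarith)).mpr hC
  exact (one_lt_div (by linarith)).mpr (by linarith)

theorem two_div_two_sub_one_div_mul_drift_le {C w : ℝ} (hC : 1 < C)
    (hw : C * (2 * C + 2) ≤ w) : 2 / (2 - 1 / C) * ((1 - 1 / C) * w + C + 1) ≤ w := by
  have hpos : 0 < 1 / C := by positivity
  have hlt : 1 / C < 1 := (div_lt_one (by linarith)).mpr hC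
  rw [div_mul_eq_mul_div, div_le_iff₀ (by linarith)]
  have hinv : 1 / C * C = 1 := by field_simp
  nlinarith [mul_le_mul_of_nonneg_left hw hpos.le]

theorem condExp_const_mul_max_one_le {m m0 : MeasurableSpace Ω} {μ : Measure Ω}
    [IsFiniteMeasure μ] (hm : m ≤ m0) {f : Ω → ℝ} (hf : Integrable f μ) (hf0 : 0 ≤ f)
    {c : ℝ} (hc : 0 ≤ c) :
    μ[fun ω => c * max (f ω) 1 | m] ≤ᵐ[μ] fun ω => c * (μ[f | m] ω + 1) := by
  have hmax : μ[fun ω => max (f ω) 1 | m] ≤ᵐ[μ] μ[f | m] + 1 := by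
    have hle := condExp_mono (m := m) (hf.sup (integrable_const 1)) (hf.add (integrable_const 1))
      (ae_of_all μ fun ω => max_le (le_add_of_nonneg_right zero_le_one)
        (le_add_of_nonneg_left (hf0 ω)))
    filter_upwards [hle, condExp_add hf (integrable_const (1 : ℝ)) m] with ω h1 h2
    rw [condExp_const hm] at h2
    exact h1.trans_eq h2
  filter_upwards [condExp_smul c (fun ω => max (f ω) 1) m, hmax] with ω h1 h2
  exact h1.trans_le (mul_le_mul_of_nonneg_left h2 hc)

theorem condExp_pow_mul_max_one_le_of_drift {m0 : MeasurableSpace Ω} {μ : Measure Ω}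
    [IsFiniteMeasure μ] {𝓕 : Filtration ℕ m0} {W : ℕ → Ω → ℝ} {n : ℕ}
    (hnonneg : 0 ≤ W (n + 1)) (hint : Integrable (W (n + 1)) μ) {C : ℝ} (hC : 1 < C)
    (hdrift : ∀ᵐ ω ∂μ, μ[W (n + 1) | 𝓕 n] ω ≤ (1 - 1 / C) * W n ω + C) :
    ∀ᵐ ω ∂μ, C * (2 * C + 2) < W n ω →
      μ[fun ω => (2 / (2 - 1 / C)) ^ (n + 1) * max (W (n + 1) ω) 1 | 𝓕 n] ω ≤
        (2 / (2 - 1 / C)) ^ n * max (W n ω) 1 := by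
  set η := 2 / (2 - 1 / C)
  have hη : 0 ≤ η := zero_le_one.trans (one_lt_two_div_two_sub_one_div hC).le
  filter_upwards [condExp_const_mul_max_one_le (𝓕.le n) hint hnonneg (pow_nonneg hη (n + 1)),
    hdrift] with ω hmax hdriftω hW
  have hW1 : 1 ≤ W n ω := by nlinarith
  calc μ[fun ω => η ^ (n + 1) * max (W (n + 1) ω) 1 | 𝓕 n] ω
      ≤ η ^ (n + 1) * (μ[W (n + 1) | 𝓕 n] ω + 1) := hmax
    _ ≤ η ^ (n + 1) * ((1 - 1 / C) * W n ω + C + 1) := by gcongr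
    _ = η ^ n * (η * ((1 - 1 / C) * W n ω + C + 1)) := by ring
    _ ≤ η ^ n * W n ω := by gcongr; exact two_div_two_sub_one_div_mul_drift_le hC hW.le
    _ = η ^ n * max (W n ω) 1 := by rw [max_eq_left hW1]

end Drift

open Classical in
/-- Part 1 of Lemma "annex": for an adapted nonnegative process satisfying the
Foster–Lyapunov drift condition with constants `(1 - 1/C, C)` and started at a
constant `x > C₁ = C(2C+2)`, the first hitting time `ρ` of `{W ≤ C₁}` satisfies
`E[η^ρ] ≤ x` with `η = 2/(2 - 1/C)` (the integrand is `∞` when `ρ = ∞`);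
in particular `ρ < ∞` almost surely. -/
theorem hitting_time_exp_moment {Ω : Type*} {m0 : MeasurableSpace Ω}
    (μ : Measure Ω) [IsProbabilityMeasure μ]
    (𝓕 : Filtration ℕ m0) (W : ℕ → Ω → ℝ)
    (hadapt : Adapted 𝓕 W) (hnonneg : ∀ i ω, 0 ≤ W i ω)
    (hint : ∀ i, Integrable (W i) μ)
    (C : ℝ) (hC : 1 < C)
    (hdrift : ∀ i : ℕ, 1 ≤ i →
      ∀ᵐ ω ∂μ, (μ[W i | 𝓕 (i - 1)]) ω ≤ (1 - 1 / C) * W (i - 1) ω + C)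
    (x : ℝ) (hx : C * (2 * C + 2) < x)
    (hW0 : ∀ᵐ ω ∂μ, W 0 ω = x) :
    (∫⁻ ω, (if {i : ℕ | W i ω ≤ C * (2 * C + 2)}.Nonempty
        then ENNReal.ofReal
          ((2 / (2 - 1 / C)) ^ sInf {i : ℕ | W i ω ≤ C * (2 * C + 2)})
        else ⊤) ∂μ) ≤ ENNReal.ofReal x ∧
      ∀ᵐ ω ∂μ, ∃ i : ℕ, W i ω ≤ C * (2 * C + 2) := by
  set C₁ := C * (2 * C + 2)
  set η := 2 / (2 - 1 / C)
  have hη : 1 < η := one_lt_two_div_two_sub_one_div hC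
  set ρ := hittingAfter W (Set.Iic C₁) 0
  have hρ : IsStoppingTime 𝓕 ρ := hadapt.isStoppingTime_hittingAfter measurableSet_Iic
  have hintegrand := fun ω => (iSup_ofReal_stoppedProcess_pow_hittingAfter hη W C₁ ω).symm
  have hmax0 : ∫ ω, max (W 0 ω) 1 ∂μ = x := by
    have hx1 : 1 ≤ x := by nlinarith
    rw [integral_congr_ae (hW0.mono fun ω hω => by rw [hω, max_eq_left hx1])]
    simp
  have hmoment := lintegral_iSup_ofReal_stoppedProcess_pow_le hρ hint hη.le fun n => by
    filter_upwards [condExp_pow_mul_max_one_le_of_drift (hnonneg (n + 1)) (hint (n + 1)) hC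
      (by simpa using hdrift (n + 1) (by omega))] with ω hdriftV hlt
    exact hdriftV (not_le.mp (notMem_of_lt_hittingAfter (s := Set.Iic C₁) hlt (Nat.zero_le n)))
  rw [hmax0] at hmoment
  refine ⟨(lintegral_congr hintegrand).trans_le hmoment, ?_⟩
  filter_upwards [ae_lt_top (Measurable.iSup fun n =>
    (hρ.measurable_stoppedProcess_deterministic _ n).ennreal_ofReal)
    (hmoment.trans_lt ENNReal.ofReal_lt_top).ne] with ω hω
  rw [← hintegrand] at hω
  by_contra h
  simp [Set.Nonempty, h] at hω
end

section
/- Let (Ω, 𝓐, μ) be a probability space and T : Ω → Ω an ergodic measure-preserving map. Let γ : Ω → (0, ∞) be measurable with log γ integrable and ∫ log γ dμ < 0, and let δ : Ω → [0, ∞) be measurable with log(max(δ, 1)) integrable. Then for μ-almost every ω ∈ Ω, the series Σ_{i=0}^∞ δ(T^i ω) · Π_{k=0}^{i−1} γ(T^k ω) converges (is finite), where the empty product for i = 0 equals 1. -/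
/-!
Write `∏_{k<n} γ(T^k ω) = exp S_n(ω)`, with `S_n` the Birkhoff sums of `log γ`, and let
`a = ∫ log γ < 0`. The Birkhoff sums of `log γ - a/2` have negative mean, so by the maximal
ergodic theorem and ergodicity they are almost surely bounded above: `S_n ≤ C + n a/2`.
Since `log⁺ δ` is integrable and `T` preserves `μ`, Borel–Cantelli gives
`log⁺ δ(T^n ω) ≤ -n a/4` for all large `n`. The `n`-th term is then at most `e^C e^{n a/4}`.
-/

open MeasureTheory Filter Set

section BirkhoffMax

variable {Ω : Type*} {T : Ω → Ω} {g : Ω → ℝ} {N : ℕ} {ω : Ω}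

noncomputable def birkhoffMax (T : Ω → Ω) (g : Ω → ℝ) (N : ℕ) (ω : Ω) : ℝ :=
  (Finset.range (N + 1)).sup' Finset.nonempty_range_add_one fun n => birkhoffSum T g n ω

lemma birkhoffMax_le_iff {c : ℝ} :
    birkhoffMax T g N ω ≤ c ↔ ∀ n ≤ N, birkhoffSum T g n ω ≤ c := by
  simp [birkhoffMax, Finset.sup'_le_iff]

lemma birkhoffSum_le_birkhoffMax {n : ℕ} (h : n ≤ N) :
    birkhoffSum T g n ω ≤ birkhoffMax T g N ω :=
  birkhoffMax_le_iff.mp le_rfl n h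

lemma birkhoffMax_nonneg : 0 ≤ birkhoffMax T g N ω := by
  simpa using birkhoffSum_le_birkhoffMax (T := T) (g := g) (ω := ω) (Nat.zero_le N)

lemma birkhoffMax_mono (ω : Ω) : Monotone fun N => birkhoffMax T g N ω :=
  fun _ _ hMN => birkhoffMax_le_iff.mpr fun _ hn => birkhoffSum_le_birkhoffMax (hn.trans hMN)

lemma birkhoffMax_le_max_zero_add :
    birkhoffMax T g N ω ≤ max 0 (g ω + birkhoffMax T g N (T ω)) := by
  refine birkhoffMax_le_iff.mpr fun n hn => ?_
  cases n with
  | zero => simp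
  | succ n =>
    rw [birkhoffSum_succ']
    exact le_max_of_le_right (add_le_add_right (birkhoffSum_le_birkhoffMax (by omega)) _)

lemma bddAbove_birkhoffSum_apply_iff :
    BddAbove (range fun n => birkhoffSum T g n (T ω)) ↔
      BddAbove (range fun n => birkhoffSum T g n ω) := by
  simp only [bddAbove_def, forall_mem_range]
  constructor
  · rintro ⟨C, hC⟩
    refine ⟨max 0 (g ω + C), fun n => ?_⟩
    cases n with
    | zero => simp
    | succ n => rw [birkhoffSum_succ']; exact le_max_of_le_right (by linarith [hC n])
  · rintro ⟨C, hC⟩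
    refine ⟨C - g ω, fun n => ?_⟩
    have := hC (n + 1)
    rw [birkhoffSum_succ'] at this
    linarith

end BirkhoffMax

section MaximalErgodic

variable {Ω : Type*} [MeasurableSpace Ω] {μ : Measure Ω} {T : Ω → Ω} {g : Ω → ℝ}

lemma measurable_birkhoffSum (hT : Measurable T) (hg : Measurable g) (n : ℕ) :
    Measurable (birkhoffSum T g n) :=
  Finset.measurable_sum _ fun k _ => hg.comp (hT.iterate k)

lemma MeasureTheory.MeasurePreserving.integrable_birkhoffSum (hT : MeasurePreserving T μ μ)
    (hg : Integrable g μ) (n : ℕ) : Integrable (birkhoffSum T g n) μ :=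
  integrable_finsetSum _ fun k _ => (hT.iterate k).integrable_comp_of_integrable hg

lemma measurable_birkhoffMax (hT : Measurable T) (hg : Measurable g) (N : ℕ) :
    Measurable (birkhoffMax T g N) :=
  Finset.measurable_range_sup'' fun n _ => measurable_birkhoffSum hT hg n

lemma MeasureTheory.MeasurePreserving.integrable_birkhoffMax (hT : MeasurePreserving T μ μ)
    (hg : Integrable g μ) (N : ℕ) : Integrable (birkhoffMax T g N) μ := by
  have : birkhoffMax T g N = (Finset.range (N + 1)).sup' Finset.nonempty_range_add_one
      (birkhoffSum T g) := by
    ext ω; simp [birkhoffMax, Finset.sup'_apply]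
  rw [this]
  exact Finset.sup'_induction _ (p := fun f => Integrable f μ) _ (fun _ hf _ hf' => hf.sup hf')
    fun n _ => hT.integrable_birkhoffSum hg n

lemma MeasureTheory.MeasurePreserving.setIntegral_birkhoffMax_pos_nonneg
    (hT : MeasurePreserving T μ μ) (hg : Measurable g) (hgi : Integrable g μ) (N : ℕ) :
    0 ≤ ∫ ω in {ω | 0 < birkhoffMax T g N ω}, g ω ∂μ := by
  set M := birkhoffMax T g N
  set E := {ω | 0 < M ω}
  have hE : MeasurableSet E :=
    measurableSet_lt measurable_const (measurable_birkhoffMax hT.measurable hg N)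
  have hM : Integrable M μ := hT.integrable_birkhoffMax hgi N
  have hMT : Integrable (M ∘ T) μ := hT.integrable_comp_of_integrable hM
  -- On `E` the maximum in `birkhoffMax_le_max_zero_add` is not attained at `0`.
  have hpt : ∀ ω ∈ E, M ω - M (T ω) ≤ g ω := fun ω hω => by
    have := birkhoffMax_le_max_zero_add (T := T) (g := g) (N := N) (ω := ω)
    rw [max_def] at this
    split_ifs at this <;> simp only [E, mem_ofPred_eq] at hω <;> linarith
  have hM_comp : ∫ ω, M (T ω) ∂μ = ∫ ω, M ω ∂μ := by
    rw [← integral_map hT.aemeasurable (by rw [hT.map_eq]; exact hM.aestronglyMeasurable),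
      hT.map_eq]
  calc (0 : ℝ) = ∫ ω, M ω ∂μ - ∫ ω, M (T ω) ∂μ := by rw [hM_comp, sub_self]
    _ ≤ ∫ ω in E, M ω ∂μ - ∫ ω in E, M (T ω) ∂μ := by
      rw [setIntegral_eq_integral_of_forall_compl_eq_zero (s := E) fun ω hω =>
        le_antisymm (not_lt.mp hω) birkhoffMax_nonneg]
      exact sub_le_sub_left (setIntegral_le_integral hMT
        (Eventually.of_forall fun _ => birkhoffMax_nonneg)) _
    _ = ∫ ω in E, (M ω - M (T ω)) ∂μ := (integral_sub hM.integrableOn hMT.integrableOn).symm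
    _ ≤ ∫ ω in E, g ω ∂μ :=
      setIntegral_mono_on (hM.sub hMT).integrableOn hgi.integrableOn hE hpt

/-- The maximal ergodic theorem. -/
theorem MeasureTheory.MeasurePreserving.setIntegral_exists_birkhoffSum_pos_nonneg
    (hT : MeasurePreserving T μ μ) (hg : Measurable g) (hgi : Integrable g μ) :
    0 ≤ ∫ ω in {ω | ∃ n, 0 < birkhoffSum T g n ω}, g ω ∂μ := by
  have hunion :
      ⋃ N, {ω | 0 < birkhoffMax T g N ω} = {ω | ∃ n, 0 < birkhoffSum T g n ω} := by
    ext ω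
    simp only [mem_iUnion, mem_ofPred_eq]
    constructor
    · rintro ⟨N, hN⟩
      by_contra! h
      exact hN.not_ge (birkhoffMax_le_iff.mpr fun n _ => h n)
    · rintro ⟨n, hn⟩
      exact ⟨n, hn.trans_le (birkhoffSum_le_birkhoffMax le_rfl)⟩
  have hlim := tendsto_setIntegral_of_monotone (s := fun N => {ω | 0 < birkhoffMax T g N ω})
    (fun N => measurableSet_lt measurable_const (measurable_birkhoffMax hT.measurable hg N))
    (fun _ _ hMN _ hω => hω.trans_le (birkhoffMax_mono _ hMN)) hgi.integrableOn
  rw [hunion] at hlim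
  exact ge_of_tendsto' hlim (hT.setIntegral_birkhoffMax_pos_nonneg hg hgi)

theorem Ergodic.ae_bddAbove_birkhoffSum (hT : Ergodic T μ) (hg : Measurable g)
    (hgi : Integrable g μ) (hneg : ∫ ω, g ω ∂μ < 0) :
    ∀ᵐ ω ∂μ, BddAbove (range fun n => birkhoffSum T g n ω) := by
  have hs := measurableSet_bddAbove_range (measurable_birkhoffSum hT.measurable hg)
  have hinv : T ⁻¹' {ω | BddAbove (range fun n => birkhoffSum T g n ω)} =
      {ω | BddAbove (range fun n => birkhoffSum T g n ω)} :=
    ext fun _ => bddAbove_birkhoffSum_apply_iff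
  refine (hT.toPreErgodic.ae_mem_or_ae_notMem hs hinv).resolve_right fun hunbdd => ?_
  -- Almost every orbit has a positive Birkhoff sum, so the maximal ergodic theorem
  -- applies to the whole space.
  have hpos : ∀ᵐ ω ∂μ, ω ∈ {ω | ∃ n, 0 < birkhoffSum T g n ω} :=
    hunbdd.mono fun ω hω => by
      have : ¬ ∀ n, birkhoffSum T g n ω ≤ 0 := fun h => hω ⟨0, forall_mem_range.mpr h⟩
      obtain ⟨n, hn⟩ := not_forall.mp this
      exact ⟨n, not_le.mp hn⟩
  have := hT.toMeasurePreserving.setIntegral_exists_birkhoffSum_pos_nonneg hg hgi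
  rw [Measure.restrict_eq_self_of_ae_mem hpos] at this
  linarith

end MaximalErgodic

section Growth

variable {Ω : Type*} [MeasurableSpace Ω] {μ : Measure Ω} {T : Ω → Ω}

theorem MeasureTheory.MeasurePreserving.ae_eventually_comp_iterate_le [IsProbabilityMeasure μ]
    (hT : MeasurePreserving T μ μ) {X : Ω → ℝ} (hX : Integrable X μ) (hX0 : 0 ≤ X)
    {ε : ℝ} (hε : 0 < ε) :
    ∀ᵐ ω ∂μ, ∀ᶠ n : ℕ in atTop, X (T^[n] ω) ≤ ε * n := by
  -- `tsum_prob_mem_Ioi_lt_top` is stated for the measure `ℙ` of a `MeasureSpace`.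
  let : MeasureSpace Ω := ⟨μ⟩
  have hsum := ProbabilityTheory.tsum_prob_mem_Ioi_lt_top (hX.div_const ε)
    fun ω => div_nonneg (hX0 ω) hε.le
  have hpre : ∀ n : ℕ,
      μ {ω | X (T^[n] ω) / ε ∈ Ioi (n : ℝ)} = μ {ω | X ω / ε ∈ Ioi (n : ℝ)} :=
    fun n => (hT.iterate n).measure_preimage
      (nullMeasurableSet_lt aemeasurable_const (hX.div_const ε).aemeasurable)
  filter_upwards [ae_eventually_notMem (μ := μ)
    (s := fun n => {ω | X (T^[n] ω) / ε ∈ Ioi (n : ℝ)}) (by simp_rw [hpre]; exact hsum.ne)]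
    with ω hω
  filter_upwards [hω] with n hn
  simpa [not_lt, div_le_iff₀ hε, mul_comm] using hn

end Growth

lemma summable_mul_exp_of_linear_bounds {d s : ℕ → ℝ} {C r : ℝ} (hr : r < 0)
    (hd0 : ∀ n, 0 ≤ d n) (hd : ∀ᶠ n in atTop, Real.log (max (d n) 1) ≤ -r * n)
    (hs : ∀ n, s n ≤ C + 2 * r * n) :
    Summable fun n => d n * Real.exp (s n) := by
  refine Summable.of_norm_bounded_eventually_nat
    ((summable_geometric_of_lt_one (Real.exp_pos r).le (Real.exp_lt_one_iff.mpr hr)).mul_left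
      (Real.exp C)) ?_
  filter_upwards [hd] with n hn
  have hdn : d n ≤ Real.exp (-r * n) :=
    (le_max_left _ _).trans ((Real.le_exp_log _).trans (Real.exp_le_exp.mpr hn))
  calc ‖d n * Real.exp (s n)‖ = d n * Real.exp (s n) := by
        rw [Real.norm_of_nonneg (mul_nonneg (hd0 n) (Real.exp_pos _).le)]
    _ ≤ Real.exp (-r * n) * Real.exp (C + 2 * r * n) := by gcongr; exact hs n
    _ = Real.exp C * Real.exp r ^ n := by
        rw [← Real.exp_add, ← Real.exp_nat_mul, ← Real.exp_add]; ring_nf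

lemma prod_range_iterate_eq_exp_birkhoffSum {Ω : Type*} (T : Ω → Ω) {γ : Ω → ℝ}
    (hγ : ∀ ω, 0 < γ ω) (n : ℕ) (ω : Ω) :
    ∏ k ∈ Finset.range n, γ (T^[k] ω) =
      Real.exp (birkhoffSum T (fun ω => Real.log (γ ω)) n ω) := by
  rw [birkhoffSum, Real.exp_sum]
  exact Finset.prod_congr rfl fun k _ => (Real.exp_log (hγ _)).symm

theorem summable_random_products_general {Ω : Type*} [MeasurableSpace Ω]
    (μ : Measure Ω) [IsProbabilityMeasure μ]
    (T : Ω → Ω) (hT : Ergodic T μ)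
    (γ : Ω → ℝ) (hγmeas : Measurable γ) (hγpos : ∀ ω, 0 < γ ω)
    (hγint : Integrable (fun ω => Real.log (γ ω)) μ)
    (hγneg : (∫ ω, Real.log (γ ω) ∂μ) < 0)
    (δ : Ω → ℝ) (hδnonneg : ∀ ω, 0 ≤ δ ω)
    (hδint : Integrable (fun ω => Real.log (max (δ ω) 1)) μ) :
    ∀ᵐ ω ∂μ, Summable fun i : ℕ =>
      δ (T^[i] ω) * ∏ k ∈ Finset.range i, γ (T^[k] ω) := by
  set a := ∫ ω, Real.log (γ ω) ∂μ
  -- Centring `log γ` at `a / 2` keeps the mean negative, with room `a / 4` for `log⁺ δ`.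
  have hbdd := hT.ae_bddAbove_birkhoffSum (g := fun ω => Real.log (γ ω) - a / 2)
    (hγmeas.log.sub measurable_const) (hγint.sub (integrable_const _))
    (by rw [integral_sub hγint (integrable_const _), integral_const, probReal_univ, one_smul]
        linarith)
  have hδgrowth := hT.toMeasurePreserving.ae_eventually_comp_iterate_le hδint
    (fun ω => Real.log_nonneg (le_max_right _ _)) (ε := -(a / 4)) (by linarith)
  filter_upwards [hbdd, hδgrowth] with ω ⟨C, hC⟩ hδω
  simp_rw [prod_range_iterate_eq_exp_birkhoffSum T hγpos]
  refine summable_mul_exp_of_linear_bounds (C := C) (by linarith : a / 4 < 0)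
    (fun n => hδnonneg _) hδω fun n => ?_
  have := hC (mem_range_self n)
  simp only [birkhoffSum, Finset.sum_sub_distrib, Finset.sum_const, Finset.card_range,
    nsmul_eq_mul] at this ⊢
  linarith

/-- Almost-sure convergence of the stationary solution of the stochastic
recursion `U_t = γ U_{t-1} + δ` in an ergodic environment: under the
logarithmic moment conditions, the series `Σ_i δ(T^i ω) Π_{k<i} γ(T^k ω)`
converges almost surely. -/
theorem summable_random_products {Ω : Type*} [MeasurableSpace Ω]
    (μ : Measure Ω) [IsProbabilityMeasure μ]
    (T : Ω → Ω) (hT : Ergodic T μ)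
    (γ : Ω → ℝ) (hγmeas : Measurable γ) (hγpos : ∀ ω, 0 < γ ω)
    (hγint : Integrable (fun ω => Real.log (γ ω)) μ)
    (hγneg : (∫ ω, Real.log (γ ω) ∂μ) < 0)
    (δ : Ω → ℝ) (hδmeas : Measurable δ) (hδnonneg : ∀ ω, 0 ≤ δ ω)
    (hδint : Integrable (fun ω => Real.log (max (δ ω) 1)) μ) :
    ∀ᵐ ω ∂μ, Summable fun i : ℕ =>
      δ (T^[i] ω) * ∏ k ∈ Finset.range i, γ (T^[k] ω) :=
  summable_random_products_general μ T hT γ hγmeas hγpos hγint hγneg δ hδnonneg hδint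
end
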